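/- Under the Markov dynamics above with (V,C) strongly connected, |V| = N > 1, a a proper coloring of the underlying undirected graph G (where C is a sensing sub-relation of G covering each undirected edge in at least one direction), x(0) not satisfying, F(0) = {i : x_i(0) = a_i}, U(0) the unsatisfied set: if U(0) ⊆ F(0), then with probability at least γ^{N^3}, within at most N^2 steps the process reaches x(t̃) with F(t̃) ⊋ F(0) and |F(t̃)| = |F(0)| + 1. -/

import Mathlib

/-!
An unsatisfied vertex `v` has a sensing in-neighbour `w` of its own colour; since `U(0) ⊆ F(0)`
and `a` is proper, `v ∈ F(0)` and `w ∉ F(0)`. Close a shortest sensing path `v → ⋯ → w` into a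
cycle by the edge `w → v`. Each vertex of the cycle in turn copies the colour of its successor,
which leaves the successor unsatisfied, so the conflict travels around the cycle and every move is
allowed; a full round shifts the colours by one place. After `P - 1` rounds and all but the last
move of one more round, `P + 1 ≤ N` being the number of vertices on the cycle, every colour is
back, and the last mover `w`, still unsatisfied, takes the colour `a w`. That is `P (P + 1) ≤ N²`
steps, each of probability at least `γ^N`.
-/

open MeasureTheory

/-- A vertex `i` is unsatisfied under assignment `x` (w.r.t. sensing edges `C`)
iff some sensed in-neighbor shares its color. -/
def CFLUnsat {V D : Type*} (C : Set (V × V)) (x : V → D) (i : V) : Prop :=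
  ∃ j, (j, i) ∈ C ∧ x j = x i

namespace Relation.ReflTransGen

variable {α : Type*} {r : α → α → Prop} {a b : α}

lemma exists_path (h : ReflTransGen r a b) :
    ∃ n, ∃ p : ℕ → α, p 0 = a ∧ p n = b ∧ ∀ k < n, r (p k) (p (k + 1)) := by
  induction h with
  | refl => exact ⟨0, fun _ => a, rfl, rfl, fun k hk => absurd hk (Nat.not_lt_zero k)⟩
  | @tail b c _ hbc ih =>
    obtain ⟨n, p, hp0, hpn, hp⟩ := ih
    refine ⟨n + 1, fun k => if k ≤ n then p k else c, by simpa using hp0, by simp, ?_⟩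
    intro k hk
    rcases Nat.lt_or_ge k n with hkn | hkn
    · simpa [hkn.le, Nat.succ_le_of_lt hkn] using hp k hkn
    · obtain rfl : k = n := by omega
      simpa [hpn] using hbc

lemma exists_injOn_path (h : ReflTransGen r a b) :
    ∃ n, ∃ p : ℕ → α, p 0 = a ∧ p n = b ∧ (∀ k < n, r (p k) (p (k + 1))) ∧
      Set.InjOn p (Set.Iic n) := by
  classical
  have hex := h.exists_path
  obtain ⟨p, hp0, hpn, hp⟩ := Nat.find_spec hex
  refine ⟨_, p, hp0, hpn, hp, ?_⟩
  -- a repeated vertex `p i = p j` could be cut out, giving a shorter path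
  have hne : ∀ i j, i < j → j ≤ Nat.find hex → p i ≠ p j := by
    intro i j hij hj heq
    refine Nat.find_min hex (m := Nat.find hex - (j - i)) (by omega)
      ⟨fun k => if k ≤ i then p k else p (k + (j - i)), by simpa using hp0, ?_, ?_⟩
    · rcases Nat.lt_or_ge j (Nat.find hex) with hjn | hjn
      · simp only [show ¬ Nat.find hex - (j - i) ≤ i by omega, if_false]
        rw [show Nat.find hex - (j - i) + (j - i) = Nat.find hex by omega, hpn]
      · simp only [show Nat.find hex - (j - i) ≤ i by omega, if_true]
        rw [show Nat.find hex - (j - i) = i by omega, heq, show j = Nat.find hex by omega, hpn]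
    · intro k hk
      rcases lt_trichotomy k i with hki | rfl | hki
      · simpa [hki.le, Nat.succ_le_of_lt hki] using hp k (by omega)
      · simpa [heq, show k + 1 + (j - k) = j + 1 by omega] using hp j (by omega)
      · simpa [hki.not_ge, show ¬ k + 1 ≤ i by omega,
          show k + 1 + (j - i) = k + (j - i) + 1 by omega] using hp (k + (j - i)) (by omega)
  intro i hi j hj hij
  by_contra hij'
  rcases Nat.lt_or_gt_of_ne hij' with hlt | hlt
  · exact hne i j hlt hj hij
  · exact hne j i hlt hi hij.symm

end Relation.ReflTransGen

lemma Set.InjOn.add_one_le_card {α : Type*} [Fintype α] {p : ℕ → α} {n : ℕ}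
    (h : Set.InjOn p (Set.Iic n)) : n + 1 ≤ Fintype.card α := by
  simpa using Finset.card_le_card_of_injOn (s := Finset.Iic n) p
    (fun _ _ => Finset.mem_coe.mpr (Finset.mem_univ _)) (by simpa using h)

section Dynamics

variable {V D : Type*} (C : Set (V × V))

def CFLStep (x y : V → D) : Prop := ∀ i, ¬ CFLUnsat C x i → y i = x i

def CFLReachesIn (n : ℕ) (x y : V → D) : Prop :=
  ∃ h : ℕ → V → D, h 0 = x ∧ h n = y ∧ ∀ t < n, CFLStep C (h t) (h (t + 1))

variable {C}

lemma CFLStep.update_of_unsat [DecidableEq V] {x : V → D} {u : V} (hu : CFLUnsat C x u)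
    (c : D) : CFLStep C x (Function.update x u c) :=
  fun _ hi => Function.update_of_ne (by rintro rfl; exact hi hu) _ _

namespace CFLReachesIn

lemma refl (x : V → D) : CFLReachesIn C 0 x x :=
  ⟨fun _ => x, rfl, rfl, fun t ht => absurd ht (Nat.not_lt_zero t)⟩

lemma single {x y : V → D} (h : CFLStep C x y) : CFLReachesIn C 1 x y := by
  refine ⟨fun t => if t = 0 then x else y, rfl, rfl, fun t ht => ?_⟩
  obtain rfl : t = 0 := by omega
  simpa using h

lemma trans {m n : ℕ} {x y z : V → D} (hxy : CFLReachesIn C m x y)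
    (hyz : CFLReachesIn C n y z) : CFLReachesIn C (m + n) x z := by
  obtain ⟨f, hf0, hfm, hf⟩ := hxy
  obtain ⟨g, hg0, hgn, hg⟩ := hyz
  set h : ℕ → V → D := fun t => if t ≤ m then f t else g (t - m)
  have hge : ∀ t, m ≤ t → h t = g (t - m) := by
    intro t ht
    rcases ht.eq_or_lt with rfl | ht
    · simp [h, hfm, hg0]
    · simp [h, ht.not_ge]
  refine ⟨h, by simp [h, hf0], by rw [hge _ (by omega), Nat.add_sub_cancel_left, hgn], ?_⟩
  intro t ht
  rcases Nat.lt_or_ge t m with htm | htm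
  · simpa [h, htm.le, Nat.succ_le_of_lt htm] using hf t htm
  · rw [hge t htm, hge (t + 1) (by omega), Nat.sub_add_comm htm]
    exact hg (t - m) (by omega)

/-- Passing the conflict along a path: each vertex in turn copies the colour of its successor,
which makes the successor unsatisfied; the last vertex takes an arbitrary colour `c`. -/
lemma exists_passAlong [DecidableEq V] (m : ℕ) {p : ℕ → V} (hp : ∀ k < m, (p k, p (k + 1)) ∈ C)
    (hinj : Set.InjOn p (Set.Iic m)) {x : V → D} (hx : CFLUnsat C x (p 0)) (c : D) :
    ∃ y, CFLReachesIn C (m + 1) x y ∧ (∀ k < m, y (p k) = x (p (k + 1))) ∧ y (p m) = c ∧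
      ∀ u ∉ p '' Set.Iic m, y u = x u := by
  induction m generalizing p x with
  | zero =>
    refine ⟨Function.update x (p 0) c, single (.update_of_unsat hx c), fun k hk => absurd hk
      (Nat.not_lt_zero k), by simp, fun u hu => Function.update_of_ne ?_ _ _⟩
    rintro rfl
    exact hu ⟨0, Set.mem_Iic.mpr le_rfl, rfl⟩
  | succ m ih =>
    have hne : ∀ k ≤ m, p 0 ≠ p (k + 1) := fun k hk h =>
      Nat.succ_ne_zero k (hinj (by simp) (by simp; omega) h).symm
    set x₁ := Function.update x (p 0) (x (p 1))
    have hx₁ : ∀ k ≤ m, x₁ (p (k + 1)) = x (p (k + 1)) :=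
      fun k hk => Function.update_of_ne (hne k hk).symm _ _
    have hunsat : CFLUnsat C x₁ (p 1) :=
      ⟨p 0, hp 0 (by omega), by simp [x₁, hx₁ 0 (Nat.zero_le _)]⟩
    obtain ⟨y, hy, hyk, hym, hyu⟩ := ih (p := fun k => p (k + 1))
      (fun k hk => hp (k + 1) (by omega))
      (fun i hi j hj h => by simpa using hinj (by simp at hi ⊢; omega) (by simp at hj ⊢; omega) h)
      hunsat
    have hy0 : y (p 0) = x (p 1) := by
      rw [hyu _ (by rintro ⟨k, hk, h⟩; exact hne k hk h.symm)]
      simp [x₁]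
    refine ⟨y, by simpa [add_comm] using (single (.update_of_unsat hx (x (p 1)))).trans hy,
      fun k hk => ?_, hym, fun u hu => ?_⟩
    · rcases k with _ | k
      · exact hy0
      · rw [hyk k (by omega), hx₁ (k + 1) (by omega)]
    · have hu₀ : u ≠ p 0 := fun h => hu ⟨0, by simp, h.symm⟩
      rw [hyu u (fun ⟨k, hk, h⟩ => hu ⟨k + 1, by simp at hk ⊢; omega, h⟩)]
      exact Function.update_of_ne hu₀ _ _

end CFLReachesIn

end Dynamics

section Rotation

variable {V D : Type*} {C : Set (V × V)} {p : ℕ → V} {P : ℕ}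

/-- `y` is `x` with the colours on the cycle `p 0 → ⋯ → p P → p 0` read `j` places further on,
the colours being indexed modulo `P` since `p P` repeats the colour of `p 0`. -/
def IsCycleRotation (p : ℕ → V) (P : ℕ) (x : V → D) (j : ℕ) (y : V → D) : Prop :=
  (∀ k ≤ P, y (p k) = x (p ((k + j) % P))) ∧ ∀ u ∉ p '' Set.Iic P, y u = x u

variable [DecidableEq V] (hp : ∀ k < P, (p k, p (k + 1)) ∈ C) (hback : (p P, p 0) ∈ C)
  (hinj : Set.InjOn p (Set.Iic P))
include hp hback hinj

lemma IsCycleRotation.exists_reachesIn_round {x y : V → D} {j : ℕ}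
    (hy : IsCycleRotation p P x j y) (c : D) :
    ∃ y', CFLReachesIn C (P + 1) y y' ∧ (∀ k < P, y' (p k) = x (p ((k + (j + 1)) % P))) ∧
      y' (p P) = c ∧ ∀ u ∉ p '' Set.Iic P, y' u = x u := by
  have hunsat : CFLUnsat C y (p 0) :=
    ⟨p P, hback, by rw [hy.1 P le_rfl, hy.1 0 (Nat.zero_le _), Nat.add_mod_left, zero_add]⟩
  obtain ⟨y', hy', hk, hP, hu⟩ := CFLReachesIn.exists_passAlong P hp hinj hunsat c
  refine ⟨y', hy', fun k hkP => ?_, hP, fun u hu' => (hu u hu').trans (hy.2 u hu')⟩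
  rw [hk k hkP, hy.1 (k + 1) hkP, Nat.add_right_comm, add_assoc]

lemma exists_reachesIn_isCycleRotation {x : V → D} (hx : x (p P) = x (p 0))
    (j : ℕ) : ∃ y, CFLReachesIn C (j * (P + 1)) x y ∧ IsCycleRotation p P x j y := by
  induction j with
  | zero =>
    refine ⟨x, by simpa using CFLReachesIn.refl x, fun k hk => ?_, fun _ _ => rfl⟩
    rcases hk.lt_or_eq with hk | rfl
    · rw [add_zero, Nat.mod_eq_of_lt hk]
    · rw [add_zero, Nat.mod_self, hx]
  | succ j ih =>
    obtain ⟨y, hy, hrot⟩ := ih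
    obtain ⟨y', hy', hk, hP', hu⟩ :=
      hrot.exists_reachesIn_round hp hback hinj (x (p ((j + 1) % P)))
    refine ⟨y', by rw [Nat.succ_mul]; exact hy.trans hy', fun k hk' => ?_, hu⟩
    rcases hk'.lt_or_eq with hk' | rfl
    · exact hk k hk'
    · rw [hP', Nat.add_mod_left]

/-- `P - 1` rotations, then a last round whose final mover `p P` takes the colour `c`. -/
lemma reachesIn_update_of_cycle (hP : 0 < P) {x : V → D} (hx : x (p P) = x (p 0)) (c : D) :
    CFLReachesIn C (P * (P + 1)) x (Function.update x (p P) c) := by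
  obtain ⟨y, hy, hrot⟩ := exists_reachesIn_isCycleRotation hp hback hinj hx (P - 1)
  obtain ⟨y', hy', hk, hP', hu⟩ := hrot.exists_reachesIn_round hp hback hinj c
  have hy'_eq : y' = Function.update x (p P) c := by
    funext u
    by_cases huP : u = p P
    · rw [huP, hP', Function.update_self]
    rw [Function.update_of_ne huP]
    by_cases hmem : u ∈ p '' Set.Iic P
    · obtain ⟨k, hkP, rfl⟩ := hmem
      have hk' : k < P := lt_of_le_of_ne hkP (fun h => huP (h ▸ rfl))
      rw [hk k hk', Nat.sub_add_cancel hP, Nat.add_mod_right, Nat.mod_eq_of_lt hk']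
    · exact hu u hmem
  rw [← hy'_eq, ← Nat.sub_add_cancel hP, Nat.succ_mul, Nat.sub_add_cancel hP]
  exact hy.trans hy'

end Rotation

lemma le_measure_of_reachesIn {V D : Type*} [Fintype V] {C : Set (V × V)}
    {Ω : Type*} [MeasurableSpace Ω] {μ : Measure Ω} [IsFiniteMeasure μ] {X : ℕ → Ω → V → D}
    {γ : ℝ} (hγ₀ : 0 ≤ γ) (hγ₁ : γ ≤ 1)
    (hstep : ∀ (t : ℕ) (h : ℕ → V → D), CFLStep C (h t) (h (t + 1)) →
      γ ^ (Nat.card {i : V // CFLUnsat C (h t) i}) * (μ {ω | ∀ s ≤ t, X s ω = h s}).toReal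
        ≤ (μ {ω | ∀ s ≤ t + 1, X s ω = h s}).toReal)
    {T : ℕ} {x y : V → D} (hxy : CFLReachesIn C T x y) :
    γ ^ (Fintype.card V * T) * (μ {ω | X 0 ω = x}).toReal
      ≤ (μ ({ω | X T ω = y} ∩ {ω | X 0 ω = x})).toReal := by
  obtain ⟨h, h0, hT, hh⟩ := hxy
  have key : ∀ t ≤ T, γ ^ (Fintype.card V * t) * (μ {ω | X 0 ω = x}).toReal
      ≤ (μ {ω | ∀ s ≤ t, X s ω = h s}).toReal := by
    intro t ht
    induction t with
    | zero => simp [h0]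
    | succ t ih =>
      have hcard : γ ^ Fintype.card V ≤ γ ^ Nat.card {i : V // CFLUnsat C (h t) i} :=
        pow_le_pow_of_le_one hγ₀ hγ₁ (Nat.card_eq_fintype_card (α := V) ▸ Finite.card_subtype_le _)
      calc γ ^ (Fintype.card V * (t + 1)) * (μ {ω | X 0 ω = x}).toReal
          = γ ^ Fintype.card V * (γ ^ (Fintype.card V * t) * (μ {ω | X 0 ω = x}).toReal) := by
            ring
        _ ≤ γ ^ Fintype.card V * (μ {ω | ∀ s ≤ t, X s ω = h s}).toReal :=
            mul_le_mul_of_nonneg_left (ih (by omega)) (pow_nonneg hγ₀ _)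
        _ ≤ γ ^ Nat.card {i : V // CFLUnsat C (h t) i} * (μ {ω | ∀ s ≤ t, X s ω = h s}).toReal :=
            mul_le_mul_of_nonneg_right hcard ENNReal.toReal_nonneg
        _ ≤ (μ {ω | ∀ s ≤ t + 1, X s ω = h s}).toReal := hstep t h (hh t (by omega))
  refine (key T le_rfl).trans (ENNReal.toReal_mono (measure_ne_top μ _) (measure_mono ?_))
  intro ω hω
  exact ⟨(hω T le_rfl).trans hT, (hω 0 (Nat.zero_le _)).trans h0⟩

lemma setOf_update_eq_insert {V D : Type*} [DecidableEq V] (x a : V → D) (w : V) :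
    {i | Function.update x w (a w) i = a i} = insert w {i | x i = a i} := by
  ext u
  by_cases hu : u = w <;> simp [hu]

theorem grow_target_set_by_one_prob_general {V D : Type*} [Fintype V]
    (M C : Set (V × V))
    (hsub : C ⊆ M)
    (hcov : ∀ i j : V, (i, j) ∈ M → (i, j) ∈ C ∨ (j, i) ∈ C)
    (hconn : ∀ u v : V, u ≠ v → Relation.ReflTransGen (fun p q => (p, q) ∈ C) u v)
    {Ω : Type*} [MeasurableSpace Ω]
    (μ : Measure Ω) [IsProbabilityMeasure μ]
    (X : ℕ → Ω → V → D) (γ : ℝ) (hγ : γ ∈ Set.Ioc (0 : ℝ) 1)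
    (hstep : ∀ (t : ℕ) (h : ℕ → V → D),
      (∀ i : V, ¬ CFLUnsat C (h t) i → h (t + 1) i = h t i) →
      γ ^ (Nat.card {i : V // CFLUnsat C (h t) i}) * (μ {ω | ∀ s ≤ t, X s ω = h s}).toReal
        ≤ (μ {ω | ∀ s ≤ t + 1, X s ω = h s}).toReal)
    (a : V → D) (hproper : ∀ i j : V, (i, j) ∈ M → a i ≠ a j)
    (x0 : V → D) (hx0 : ∃ i j : V, (i, j) ∈ M ∧ x0 i = x0 j)
    (hUF : {i : V | CFLUnsat C x0 i} ⊆ {i : V | x0 i = a i}) :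
    ∃ t ≤ (Fintype.card V) ^ 2, ∃ y : V → D,
      {i : V | x0 i = a i} ⊂ {i : V | y i = a i} ∧
      Nat.card {i : V | y i = a i} = Nat.card {i : V | x0 i = a i} + 1 ∧
      γ ^ ((Fintype.card V) ^ 3) * (μ {ω | X 0 ω = x0}).toReal
        ≤ (μ ({ω | X t ω = y} ∩ {ω | X 0 ω = x0})).toReal := by
  classical
  obtain ⟨v, w, hwv, hxwv⟩ : ∃ v w, (w, v) ∈ C ∧ x0 w = x0 v := by
    obtain ⟨i, j, hij, hx⟩ := hx0
    rcases hcov i j hij with h | h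
    exacts [⟨j, i, h, hx⟩, ⟨i, j, h, hx.symm⟩]
  have hv : x0 v = a v := hUF ⟨w, hwv, hxwv⟩
  have hw : w ∉ {i | x0 i = a i} := fun hw => hproper w v (hsub hwv) (by rw [← hw, hxwv, hv])
  have hvw : v ≠ w := fun h => hw (h ▸ hv)
  obtain ⟨P, p, rfl, rfl, hp, hinj⟩ := (hconn v w hvw).exists_injOn_path
  have hP : 0 < P := Nat.pos_of_ne_zero (by rintro rfl; exact hvw rfl)
  have hT : P * (P + 1) ≤ Fintype.card V ^ 2 := by
    have hPN := hinj.add_one_le_card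
    rw [sq]
    exact Nat.mul_le_mul (by omega) hPN
  have hreach := reachesIn_update_of_cycle hp hwv hinj hP hxwv (a (p P))
  refine ⟨P * (P + 1), hT, Function.update x0 (p P) (a (p P)), ?_, ?_, ?_⟩
  · rw [setOf_update_eq_insert]
    exact Set.ssubset_insert hw
  · rw [setOf_update_eq_insert, Nat.card_coe_set_eq, Nat.card_coe_set_eq,
      Set.ncard_insert_of_notMem hw]
  · refine le_trans ?_ (le_measure_of_reachesIn hγ.1.le hγ.2 hstep hreach)
    refine mul_le_mul_of_nonneg_right (pow_le_pow_of_le_one hγ.1.le hγ.2 ?_) ENNReal.toReal_nonneg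
    rw [pow_succ']
    exact Nat.mul_le_mul_left _ hT

/-- Lemma 3: Under CFL dynamics with strongly connected sensing graph
`(V,C)`, `|V| = N > 1`, target proper coloring `a` of `G = (V,M)`, `C ⊆ M` covering
each edge in one direction, and `x0` not a proper coloring: if `U(0) ⊆ F(0)`, then
with probability at least `γ^(N^3)`, within at most `N^2` steps the chain reaches `y`
with `F(x0) ⊊ F(y)` and `|F(y)| = |F(x0)| + 1`. -/
theorem grow_target_set_by_one_prob {V D : Type*} [Fintype V] [Fintype D]
    (M C : Set (V × V))
    (hsym : ∀ i j : V, (i, j) ∈ M → (j, i) ∈ M)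
    (hirr : ∀ i : V, (i, i) ∉ M)
    (hsub : C ⊆ M)
    (hcov : ∀ i j : V, (i, j) ∈ M → (i, j) ∈ C ∨ (j, i) ∈ C)
    (hconn : ∀ u v : V, u ≠ v → Relation.ReflTransGen (fun p q => (p, q) ∈ C) u v)
    (hcard : 1 < Fintype.card V)
    {Ω : Type*} [MeasurableSpace Ω]
    (μ : Measure Ω) [IsProbabilityMeasure μ]
    (X : ℕ → Ω → V → D) (γ : ℝ) (hγ : γ ∈ Set.Ioc (0 : ℝ) 1)
    (hstep : ∀ (t : ℕ) (h : ℕ → V → D),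
      (∀ i : V, ¬ CFLUnsat C (h t) i → h (t + 1) i = h t i) →
      γ ^ (Nat.card {i : V // CFLUnsat C (h t) i}) * (μ {ω | ∀ s ≤ t, X s ω = h s}).toReal
        ≤ (μ {ω | ∀ s ≤ t + 1, X s ω = h s}).toReal)
    (a : V → D) (hproper : ∀ i j : V, (i, j) ∈ M → a i ≠ a j)
    (x0 : V → D) (hx0 : ∃ i j : V, (i, j) ∈ M ∧ x0 i = x0 j)
    (hUF : {i : V | CFLUnsat C x0 i} ⊆ {i : V | x0 i = a i}) :
    ∃ t ≤ (Fintype.card V) ^ 2, ∃ y : V → D,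
      {i : V | x0 i = a i} ⊂ {i : V | y i = a i} ∧
      Nat.card {i : V | y i = a i} = Nat.card {i : V | x0 i = a i} + 1 ∧
      γ ^ ((Fintype.card V) ^ 3) * (μ {ω | X 0 ω = x0}).toReal
        ≤ (μ ({ω | X t ω = y} ∩ {ω | X 0 ω = x0})).toReal :=
  grow_target_set_by_one_prob_general M C hsub hcov hconn μ X γ hγ hstep a hproper x0 hx0 hUF
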